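/- Let N ≥ 1, let A be an N×N real matrix with nonnegative entries and zero diagonal whose associated digraph (edge from j to i iff A_{ij} > 0) is strongly connected, and let L = D − A be the Laplacian. Then 0 is a root of the characteristic polynomial of L of algebraic multiplicity exactly one. -/

import Mathlib

/-!
Write `L x` at a vertex `i` as `∑ⱼ A i j (x i - x j)`. At a maximum of `x` every term is
nonnegative, at a minimum nonpositive. So if `L x = 0`, the maximum spreads to every in-neighbour
of a maximal vertex, and by strong connectivity `x` is constant: `ker L` is the line of constant
vectors. If `L x` is a constant `c`, comparing a maximum and a minimum of `x` gives `c = 0`, so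
`ker L² = ker L`. Hence the generalized eigenspace of `0` is one-dimensional, and its dimension is
the multiplicity of `0` as a root of the characteristic polynomial.
-/

open Matrix Polynomial Module

namespace Module.End

variable {K V : Type*} [Field K] [AddCommGroup V] [Module K V]

theorem maxGenEigenspace_zero_eq_ker_of_ker_sq_le {f : End K V}
    (h : LinearMap.ker (f ^ 2) ≤ LinearMap.ker f) : f.maxGenEigenspace 0 = LinearMap.ker f := by
  have hstable : LinearMap.ker (f ^ 1) = LinearMap.ker (f ^ 2) :=
    le_antisymm (by rw [pow_two, ← pow_one f]; exact LinearMap.ker_le_ker_comp _ _)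
      (by rwa [pow_one])
  ext x
  simp only [mem_maxGenEigenspace, zero_smul, sub_zero, LinearMap.mem_ker]
  refine ⟨fun ⟨k, hk⟩ => ?_, fun hx => ⟨1, by rwa [pow_one]⟩⟩
  cases k with
  | zero => rw [pow_zero, one_apply] at hk; rw [hk, map_zero]
  | succ m =>
    have : x ∈ LinearMap.ker (f ^ (1 + m)) := by rwa [add_comm]
    rw [← ker_pow_constant hstable m, pow_one] at this
    exact this

end Module.End

namespace Matrix

variable {ι R : Type*} [Fintype ι] [DecidableEq ι]

theorem rootMultiplicity_zero_charpoly {K : Type*} [Field K] (M : Matrix ι ι K) :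
    M.charpoly.rootMultiplicity 0 = finrank K (Module.End.maxGenEigenspace (toLin' M) 0) := by
  rw [rootMultiplicity_eq_natTrailingDegree', ← charpoly_toLin',
    LinearMap.finrank_maxGenEigenspace_zero_eq]

def laplacian [Ring R] (A : Matrix ι ι R) : Matrix ι ι R :=
  diagonal (fun i => ∑ j, A i j) - A

section Ring

variable [Ring R] (A : Matrix ι ι R)

theorem laplacian_mulVec_apply (x : ι → R) (i : ι) :
    (laplacian A *ᵥ x) i = ∑ j, A i j * (x i - x j) := by
  rw [laplacian, sub_mulVec, Pi.sub_apply, mulVec_diagonal, Finset.sum_mul]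
  simp only [mulVec, dotProduct, mul_sub, Finset.sum_sub_distrib]

theorem laplacian_mulVec_one : laplacian A *ᵥ 1 = 0 := by
  ext i
  simp [laplacian_mulVec_apply]

end Ring

section OrderedRing

variable [Ring R] [LinearOrder R] [IsStrictOrderedRing R] {A : Matrix ι ι R} {x : ι → R} {i : ι}

theorem laplacian_mulVec_apply_nonneg_of_le (hA : ∀ i j, 0 ≤ A i j) (hi : ∀ j, x j ≤ x i) :
    0 ≤ (laplacian A *ᵥ x) i := by
  rw [laplacian_mulVec_apply]
  exact Finset.sum_nonneg fun j _ => mul_nonneg (hA i j) (sub_nonneg.2 (hi j))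

theorem laplacian_mulVec_apply_nonpos_of_ge (hA : ∀ i j, 0 ≤ A i j) (hi : ∀ j, x i ≤ x j) :
    (laplacian A *ᵥ x) i ≤ 0 := by
  rw [laplacian_mulVec_apply]
  exact Finset.sum_nonpos fun j _ => mul_nonpos_of_nonneg_of_nonpos (hA i j) (sub_nonpos.2 (hi j))

theorem eq_of_laplacian_mulVec_apply_eq_zero (hA : ∀ i j, 0 ≤ A i j) (hi : ∀ j, x j ≤ x i)
    (hLx : (laplacian A *ᵥ x) i = 0) {j : ι} (hij : 0 < A i j) : x j = x i := by
  rw [laplacian_mulVec_apply] at hLx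
  have hterm := (Finset.sum_eq_zero_iff_of_nonneg fun k _ =>
    mul_nonneg (hA i k) (sub_nonneg.2 (hi k))).1 hLx j (Finset.mem_univ j)
  rcases mul_eq_zero.1 hterm with h | h
  · exact absurd h hij.ne'
  · exact (sub_eq_zero.1 h).symm

theorem eq_of_laplacian_mulVec_eq_zero (hA : ∀ i j, 0 ≤ A i j)
    (hsc : ∀ i j, Relation.ReflTransGen (fun a b => 0 < A b a) i j)
    (hx : laplacian A *ᵥ x = 0) (i j : ι) : x i = x j := by
  obtain ⟨a, -, ha⟩ := Finset.exists_max_image Finset.univ x ⟨i, Finset.mem_univ i⟩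
  have hmax : ∀ b, x b = x a := fun b =>
    Relation.ReflTransGen.head_induction_on (hsc b a) rfl fun hbc _ hc =>
      (eq_of_laplacian_mulVec_apply_eq_zero hA (fun k => hc ▸ ha k (Finset.mem_univ k))
        (congrFun hx _) hbc).trans hc
  rw [hmax i, hmax j]

theorem eq_zero_of_laplacian_mulVec_eq_const [Nonempty ι] (hA : ∀ i j, 0 ≤ A i j) {c : R}
    (hx : ∀ i, (laplacian A *ᵥ x) i = c) : c = 0 := by
  obtain ⟨a, -, ha⟩ := Finset.exists_max_image Finset.univ x Finset.univ_nonempty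
  obtain ⟨b, -, hb⟩ := Finset.exists_min_image Finset.univ x Finset.univ_nonempty
  have hc_nonneg := hx a ▸ laplacian_mulVec_apply_nonneg_of_le hA fun j => ha j (Finset.mem_univ j)
  have hc_nonpos := hx b ▸ laplacian_mulVec_apply_nonpos_of_ge hA fun j => hb j (Finset.mem_univ j)
  exact le_antisymm hc_nonpos hc_nonneg

end OrderedRing

section OrderedField

variable {K : Type*} [Field K] [LinearOrder K] [IsStrictOrderedRing K] {A : Matrix ι ι K}

theorem ker_toLin'_laplacian (hA : ∀ i j, 0 ≤ A i j)
    (hsc : ∀ i j, Relation.ReflTransGen (fun a b => 0 < A b a) i j) :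
    LinearMap.ker (toLin' (laplacian A)) = K ∙ 1 := by
  ext x
  rw [LinearMap.mem_ker, toLin'_apply, Submodule.mem_span_singleton]
  constructor
  · intro hx
    rcases isEmpty_or_nonempty ι with _ | ⟨⟨i⟩⟩
    · exact ⟨0, Subsingleton.elim _ _⟩
    · exact ⟨x i, funext fun j => by simp [eq_of_laplacian_mulVec_eq_zero hA hsc hx j i]⟩
  · rintro ⟨c, rfl⟩
    rw [mulVec_smul, laplacian_mulVec_one, smul_zero]

theorem ker_toLin'_laplacian_sq_le (hA : ∀ i j, 0 ≤ A i j)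
    (hsc : ∀ i j, Relation.ReflTransGen (fun a b => 0 < A b a) i j) :
    LinearMap.ker (toLin' (laplacian A) ^ 2) ≤ LinearMap.ker (toLin' (laplacian A)) := by
  intro x hx
  have hLx_const : toLin' (laplacian A) x ∈ K ∙ 1 := by
    rw [← ker_toLin'_laplacian hA hsc, LinearMap.mem_ker, ← Module.End.mul_apply, ← pow_two]
    exact hx
  obtain ⟨c, hc⟩ := Submodule.mem_span_singleton.1 hLx_const
  rw [LinearMap.mem_ker, ← hc]
  rcases isEmpty_or_nonempty ι with _ | _
  · exact Subsingleton.elim _ _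
  · rw [eq_zero_of_laplacian_mulVec_eq_const hA (x := x) (c := c) fun j => by
      rw [← toLin'_apply, ← hc, Pi.smul_apply, Pi.one_apply, smul_eq_mul, mul_one], zero_smul]

theorem maxGenEigenspace_toLin'_laplacian (hA : ∀ i j, 0 ≤ A i j)
    (hsc : ∀ i j, Relation.ReflTransGen (fun a b => 0 < A b a) i j) :
    Module.End.maxGenEigenspace (toLin' (laplacian A)) 0 = K ∙ 1 := by
  rw [Module.End.maxGenEigenspace_zero_eq_ker_of_ker_sq_le (f := toLin' (laplacian A))
      (ker_toLin'_laplacian_sq_le hA hsc),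
    ker_toLin'_laplacian hA hsc]

end OrderedField

end Matrix

theorem laplacian_zero_root_multiplicity_one_general
    (N : ℕ) (hN : 1 ≤ N) (A : Matrix (Fin N) (Fin N) ℝ)
    (hnonneg : ∀ i j, 0 ≤ A i j)
    (hsc : ∀ i j : Fin N, Relation.ReflTransGen (fun a b => 0 < A b a) i j)
    (L : Matrix (Fin N) (Fin N) ℝ)
    (hL : L = Matrix.diagonal (fun i => ∑ j, A i j) - A) :
    Polynomial.rootMultiplicity 0 L.charpoly = 1 := by
  have : Nonempty (Fin N) := ⟨⟨0, hN⟩⟩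
  rw [show L = laplacian A from hL, rootMultiplicity_zero_charpoly, maxGenEigenspace_toLin'_laplacian hnonneg hsc,
    finrank_span_singleton one_ne_zero]

/-- For the Laplacian `L = D - A` of a strongly connected weighted
digraph (nonnegative adjacency matrix `A`, zero diagonal, edge from `j` to `i` iff
`A i j > 0`), `0` is a root of the characteristic polynomial of `L` of algebraic
multiplicity exactly one. -/
theorem laplacian_zero_root_multiplicity_one
    (N : ℕ) (hN : 1 ≤ N) (A : Matrix (Fin N) (Fin N) ℝ)
    (hnonneg : ∀ i j, 0 ≤ A i j) (hdiag : ∀ i, A i i = 0)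
    (hsc : ∀ i j : Fin N, Relation.ReflTransGen (fun a b => 0 < A b a) i j)
    (L : Matrix (Fin N) (Fin N) ℝ)
    (hL : L = Matrix.diagonal (fun i => ∑ j, A i j) - A) :
    Polynomial.rootMultiplicity 0 L.charpoly = 1 :=
  laplacian_zero_root_multiplicity_one_general N hN A hnonneg hsc L hL
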